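/- Let G be a finite 3-connected simple graph and let S be a 3-cut of G such that the three vertices of S are pairwise adjacent in G. If u and v lie in different components of G − S, then {u, v} is a contractible non-edge of G. -/

import Mathlib

open SimpleGraph

variable {V : Type*}

/-- A graph is `k`-connected: it has at least `k+1` vertices, and removing any set of
fewer than `k` vertices leaves a connected graph. -/
def KConnected (k : ℕ) (G : SimpleGraph V) : Prop :=
  k + 1 ≤ Nat.card V ∧ ∀ S : Set V, S.ncard < k → (G.induce Sᶜ).Connected

/-- Contraction of the non-edge `{u, v}`: `u` and `v` are replaced by a single
vertex (represented here by `u`), adjacent to every vertex that was adjacent to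
`u` or to `v`. -/
def contractNonEdge (G : SimpleGraph V) (u v : V) : SimpleGraph {w : V // w ≠ v} where
  Adj a b := a ≠ b ∧ (G.Adj a.1 b.1 ∨ (a.1 = u ∧ G.Adj v b.1) ∨ (b.1 = u ∧ G.Adj a.1 v))
  symm := by
    refine ⟨?_⟩
    rintro a b ⟨hab, h | ⟨h1, h2⟩ | ⟨h1, h2⟩⟩
    · exact ⟨hab.symm, Or.inl h.symm⟩
    · exact ⟨hab.symm, Or.inr (Or.inr ⟨h1, h2.symm⟩)⟩
    · exact ⟨hab.symm, Or.inr (Or.inl ⟨h1, h2.symm⟩)⟩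
  loopless := ⟨fun a h => h.1 rfl⟩

/-- `{u, v}` is a contractible non-edge of `G`: a non-edge whose contraction yields
a `3`-connected graph. -/
def IsContractibleNonEdge (G : SimpleGraph V) (u v : V) : Prop :=
  u ≠ v ∧ ¬ G.Adj u v ∧ KConnected 3 (contractNonEdge G u v)

/-- The set of contractible non-edges of `G`, as unordered pairs of vertices. -/
def contractibleNonEdges (G : SimpleGraph V) : Set (Sym2 V) :=
  {p | ∃ u v : V, p = s(u, v) ∧ IsContractibleNonEdge G u v}

/-- `S` is a cut of `G`: deleting the vertices of `S` leaves a disconnected graph. -/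
def IsCutSet (G : SimpleGraph V) (S : Set V) : Prop :=
  ¬ (G.induce Sᶜ).Preconnected

/-- `C` is the vertex set of a (connected) component of `G − S`. -/
def IsCompOf (G : SimpleGraph V) (S : Set V) (C : Set V) : Prop :=
  C.Nonempty ∧ C ⊆ Sᶜ ∧ (G.induce C).Connected ∧
    ∀ x ∈ C, ∀ y, y ∉ S → G.Adj x y → y ∈ C

/-!
Write `π : V → V(G/uv)` for the quotient map of the contraction. Since `u` and `v` lie in
different components of `G − S`, they are non-adjacent, so `π` is a surjective graph homomorphism
and `(G/uv) − T` is the image of `G − π⁻¹(T)`. If the merged vertex is not in `T`, then `π⁻¹(T)`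
has fewer than three vertices. Otherwise `R = π⁻¹(T)` is a set of at most three vertices
containing `u` and `v`, and `G − R` is still connected: a vertex `a ∉ S ∪ R` cannot reach both
`u` and `v` in `G − S`, say it misses `z`; a path from `a` to `z` in the connected graph
`G − (R ∖ {z})` has to leave the component of `a` in `G − S` through a vertex of `S ∖ R` before
it meets `z`. Finally `S ∖ R` is a nonempty clique, because `|S| = 3` and `R` contains `u, v ∉ S`.
-/

lemma Set.ncard_insert_insert [Finite V] {S : Set V} {u v : V} (huv : u ≠ v) (huS : u ∉ S)
    (hvS : v ∉ S) : (insert u (insert v S)).ncard = S.ncard + 2 := by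
  rw [Set.ncard_insert_of_notMem (by simp [huv, huS]), Set.ncard_insert_of_notMem hvS]

lemma Nat.card_subtype_ne_add_one [Finite V] (v : V) :
    Nat.card {w // w ≠ v} + 1 = Nat.card V := by
  have hcompl := Set.ncard_add_ncard_compl ({v} : Set V)
  rw [Set.ncard_singleton] at hcompl
  rw [show Nat.card {w // w ≠ v} = ({v}ᶜ : Set V).ncard from Nat.card_coe_set_eq _]
  omega

namespace SimpleGraph

lemma Reachable.mem_of_adj_closed {W : Type*} {H : SimpleGraph W} {X : Set W}
    (hX : ∀ ⦃x y⦄, x ∈ X → H.Adj x y → y ∈ X) {a b : W} (h : H.Reachable a b) (ha : a ∈ X) :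
    b ∈ X := by
  obtain ⟨p⟩ := h
  by_contra hb
  obtain ⟨d, -, hd, hd'⟩ := p.exists_boundary_dart X ha hb
  exact hd' (hX hd d.adj)

variable {G : SimpleGraph V}

lemma Reachable.induce_mono {s t : Set V} (hst : s ⊆ t) {a b : V} {ha : a ∈ s} {hb : b ∈ s}
    (h : (G.induce s).Reachable ⟨a, ha⟩ ⟨b, hb⟩) :
    (G.induce t).Reachable ⟨a, hst ha⟩ ⟨b, hst hb⟩ :=
  h.map (G.induceHomOfLE hst).toHom

lemma Reachable.induce_trans_adj {s : Set V} {a x y : V} {ha : a ∈ s} {hx : x ∈ s}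
    (h : (G.induce s).Reachable ⟨a, ha⟩ ⟨x, hx⟩) (hxy : G.Adj x y) (hy : y ∈ s) :
    (G.induce s).Reachable ⟨a, ha⟩ ⟨y, hy⟩ :=
  h.trans (Adj.reachable (G := G.induce s) hxy)

lemma Hom.connected_induce_of_surjective {W : Type*} {H : SimpleGraph W} (f : G →g H)
    (hf : Function.Surjective f) {T : Set W} (h : (G.induce (f ⁻¹' T)).Connected) :
    (H.induce T).Connected := by
  refine h.map ⟨fun x => ⟨f x.1, x.2⟩, fun hxy => f.map_rel hxy⟩ fun y => ?_
  obtain ⟨x, hx⟩ := hf y.1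
  exact ⟨⟨x, show f x ∈ T from hx ▸ y.2⟩, Subtype.ext hx⟩

end SimpleGraph

section Components

variable {G : SimpleGraph V} {S : Set V}

lemma IsCompOf.mem_iff_reachable {C : Set V} (hC : IsCompOf G S C) {x y : V} (hx : x ∈ C)
    (hy : y ∉ S) : y ∈ C ↔ (G.induce Sᶜ).Reachable ⟨x, hC.2.1 hx⟩ ⟨y, hy⟩ := by
  refine ⟨fun hyC => (hC.2.2.1.preconnected ⟨x, hx⟩ ⟨y, hyC⟩).induce_mono hC.2.1, fun h => ?_⟩
  exact h.mem_of_adj_closed (X := {z : ↥Sᶜ | z.1 ∈ C})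
    (fun z z' hz hzz' => hC.2.2.2 z hz z' z'.2 hzz') hx

lemma IsCompOf.not_reachable {C₁ C₂ : Set V} (h₁ : IsCompOf G S C₁) (h₂ : IsCompOf G S C₂)
    (h₁₂ : C₁ ≠ C₂) {u v : V} (hu : u ∈ C₁) (hv : v ∈ C₂) :
    ¬ (G.induce Sᶜ).Reachable ⟨u, h₁.2.1 hu⟩ ⟨v, h₂.2.1 hv⟩ := by
  intro huv
  refine h₁₂ (Set.ext fun x => ⟨fun hx => ?_, fun hx => ?_⟩)
  · rw [h₂.mem_iff_reachable hv (h₁.2.1 hx)]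
    exact huv.symm.trans ((h₁.mem_iff_reachable hu _).1 hx)
  · rw [h₁.mem_iff_reachable hu (h₂.2.1 hx)]
    exact huv.trans ((h₂.mem_iff_reachable hv _).1 hx)

end Components

section Separation

variable {G : SimpleGraph V} {S R : Set V}

lemma exists_mem_reachable_of_not_reachable {a z : V}
    (hz : (G.induce (R \ {z})ᶜ).Connected) (hzR : z ∈ R) (hzS : z ∉ S) (haR : a ∉ R)
    (haS : a ∉ S) (haz : ¬ (G.induce Sᶜ).Reachable ⟨a, haS⟩ ⟨z, hzS⟩) :
    ∃ y ∈ S, ∃ hy : y ∉ R, (G.induce Rᶜ).Reachable ⟨a, haR⟩ ⟨y, hy⟩ := by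
  by_contra! hS
  have haRS : a ∉ R ∪ S := fun h => h.elim haR haS
  let D : Set ↥(R \ {z})ᶜ :=
    {x | ∃ hx : x.1 ∉ R ∪ S, (G.induce (R ∪ S)ᶜ).Reachable ⟨a, haRS⟩ ⟨x.1, hx⟩}
  have hD : ∀ ⦃x y⦄, x ∈ D → (G.induce (R \ {z})ᶜ).Adj x y → y ∈ D := by
    rintro x ⟨y, hyz⟩ ⟨hx, hax⟩ hxy
    have hRS_R : (R ∪ S)ᶜ ⊆ Rᶜ := Set.compl_subset_compl.2 Set.subset_union_left
    have hRS_S : (R ∪ S)ᶜ ⊆ Sᶜ := Set.compl_subset_compl.2 Set.subset_union_right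
    by_cases hyS : y ∈ S
    · have hyR : y ∉ R := fun hyR => hyz ⟨hyR, fun hyz' => hzS (hyz' ▸ hyS)⟩
      exact (hS y hyS hyR ((hax.induce_mono hRS_R).induce_trans_adj hxy hyR)).elim
    by_cases hyR : y ∈ R
    · obtain rfl : y = z := by_contra fun h => hyz ⟨hyR, h⟩
      exact (haz ((hax.induce_mono hRS_S).induce_trans_adj hxy hyS)).elim
    · exact ⟨_, hax.induce_trans_adj hxy fun h => h.elim hyR hyS⟩
  have hzD := (hz.preconnected ⟨a, fun h => haR h.1⟩ ⟨z, fun h => h.2 rfl⟩).mem_of_adj_closed hD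
    ⟨haRS, .rfl⟩
  exact hzD.1 (Or.inl hzR)

theorem KConnected.connected_induce_compl_of_not_reachable [Finite V] (hG : KConnected 3 G)
    (hS : 2 ≤ S.ncard) (hclique : G.IsClique S) {u v : V} (huS : u ∉ S) (hvS : v ∉ S)
    (huv : ¬ (G.induce Sᶜ).Reachable ⟨u, huS⟩ ⟨v, hvS⟩) (hR : R.ncard ≤ 3) (huR : u ∈ R)
    (hvR : v ∈ R) : (G.induce Rᶜ).Connected := by
  obtain ⟨s, hsS, hsR⟩ : ∃ s ∈ S, s ∉ R := by
    by_contra! hSR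
    have hne : u ≠ v := by rintro rfl; exact huv .rfl
    have := Set.ncard_le_ncard (Set.insert_subset huR (Set.insert_subset hvR hSR))
    rw [Set.ncard_insert_insert hne huS hvS] at this
    omega
  have hreach_s : ∀ y ∈ S, ∀ hy : y ∉ R, (G.induce Rᶜ).Reachable ⟨y, hy⟩ ⟨s, hsR⟩ := by
    intro y hyS hyR
    rcases eq_or_ne y s with rfl | hys
    · rfl
    · exact Adj.reachable (G := G.induce Rᶜ) (hclique hyS hsS hys)
  refine (connected_iff_exists_forall_reachable _).2 ⟨⟨s, hsR⟩, fun ⟨a, haR⟩ => ?_⟩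
  by_cases haS : a ∈ S
  · exact (hreach_s a haS haR).symm
  obtain ⟨z, hzR, hzS, haz⟩ :
      ∃ z ∈ R, ∃ hzS : z ∉ S, ¬ (G.induce Sᶜ).Reachable ⟨a, haS⟩ ⟨z, hzS⟩ := by
    by_cases hau : (G.induce Sᶜ).Reachable ⟨a, haS⟩ ⟨u, huS⟩
    · exact ⟨v, hvR, hvS, fun hav => huv (hau.symm.trans hav)⟩
    · exact ⟨u, huR, huS, hau⟩
  have hz : (G.induce (R \ {z})ᶜ).Connected :=
    hG.2 _ ((Set.ncard_sdiff_singleton_lt_of_mem hzR).trans_le hR)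
  obtain ⟨y, hyS, hyR, hay⟩ := exists_mem_reachable_of_not_reachable hz hzR hzS haR haS haz
  exact (hay.trans (hreach_s y hyS hyR)).symm

end Separation

section Contraction

variable {G : SimpleGraph V} {u v : V}

open Classical in
noncomputable def contractNonEdgeProj (huv : u ≠ v) (x : V) : {w : V // w ≠ v} :=
  if hx : x = v then ⟨u, huv⟩ else ⟨x, hx⟩

lemma contractNonEdgeProj_of_ne (huv : u ≠ v) {x : V} (hx : x ≠ v) :
    contractNonEdgeProj huv x = ⟨x, hx⟩ :=
  dif_neg hx

lemma contractNonEdgeProj_self (huv : u ≠ v) : contractNonEdgeProj huv v = ⟨u, huv⟩ :=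
  dif_pos rfl

lemma contractNonEdgeProj_surjective (huv : u ≠ v) :
    Function.Surjective (contractNonEdgeProj huv) :=
  fun w => ⟨w, contractNonEdgeProj_of_ne huv w.2⟩

noncomputable def contractNonEdgeHom (huv : u ≠ v) (hadj : ¬ G.Adj u v) :
    G →g contractNonEdge G u v where
  toFun := contractNonEdgeProj huv
  map_rel' {x y} hxy := by
    show _ ∧ _
    by_cases hx : x = v <;> by_cases hy : y = v
    · subst hx hy; exact absurd hxy (G.loopless.irrefl _)
    · subst hx
      rw [contractNonEdgeProj_self, contractNonEdgeProj_of_ne huv hy]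
      exact ⟨fun h => hadj (by rw [Subtype.mk.inj h]; exact hxy.symm),
        Or.inr (Or.inl ⟨rfl, hxy⟩)⟩
    · subst hy
      rw [contractNonEdgeProj_self, contractNonEdgeProj_of_ne huv hx]
      exact ⟨fun h => hadj (by rw [← Subtype.mk.inj h]; exact hxy), Or.inr (Or.inr ⟨rfl, hxy⟩)⟩
    · rw [contractNonEdgeProj_of_ne huv hx, contractNonEdgeProj_of_ne huv hy]
      exact ⟨fun h => hxy.ne (Subtype.mk.inj h), Or.inl hxy⟩

lemma preimage_contractNonEdgeProj_subset (huv : u ≠ v) (T : Set {w : V // w ≠ v}) :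
    contractNonEdgeProj huv ⁻¹' T ⊆ insert v (Subtype.val '' T) := by
  intro x hx
  by_cases hxv : x = v
  · exact Or.inl hxv
  · rw [Set.mem_preimage, contractNonEdgeProj_of_ne huv hxv] at hx
    exact Or.inr ⟨_, hx, rfl⟩

variable [Finite V]

lemma ncard_preimage_contractNonEdgeProj_le (huv : u ≠ v) (T : Set {w : V // w ≠ v}) :
    (contractNonEdgeProj huv ⁻¹' T).ncard ≤ T.ncard + 1 := by
  rw [← Set.ncard_image_of_injective T Subtype.val_injective]
  exact (Set.ncard_le_ncard (preimage_contractNonEdgeProj_subset huv T)).trans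
    (Set.ncard_insert_le _ _)

lemma ncard_preimage_contractNonEdgeProj_le_of_notMem (huv : u ≠ v) {T : Set {w : V // w ≠ v}}
    (hu : ⟨u, huv⟩ ∉ T) : (contractNonEdgeProj huv ⁻¹' T).ncard ≤ T.ncard := by
  have hv : v ∉ contractNonEdgeProj huv ⁻¹' T := by
    rwa [Set.mem_preimage, contractNonEdgeProj_self]
  rw [← Set.ncard_image_of_injective T Subtype.val_injective]
  exact Set.ncard_le_ncard
    ((Set.subset_insert_iff_of_notMem hv).1 (preimage_contractNonEdgeProj_subset huv T))

theorem isContractibleNonEdge_of_connected_preimage (huv : u ≠ v) (hadj : ¬ G.Adj u v)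
    (hcard : 5 ≤ Nat.card V)
    (hconn : ∀ T : Set {w : V // w ≠ v}, T.ncard < 3 →
      (G.induce (contractNonEdgeProj huv ⁻¹' T)ᶜ).Connected) :
    IsContractibleNonEdge G u v := by
  refine ⟨huv, hadj, ?_, fun T hT => ?_⟩
  · have := Nat.card_subtype_ne_add_one v
    omega
  · exact (contractNonEdgeHom huv hadj).connected_induce_of_surjective
      (contractNonEdgeProj_surjective huv) (hconn T hT)

end Contraction

theorem stmt14_general {V : Type*} [Fintype V] (G : SimpleGraph V) (hG : KConnected 3 G)
    (S : Set V) (hS3 : S.ncard = 3)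
    (htri : ∀ x ∈ S, ∀ y ∈ S, x ≠ y → G.Adj x y)
    (u v : V) (C1 C2 : Set V) (h1 : IsCompOf G S C1) (h2 : IsCompOf G S C2)
    (h12 : C1 ≠ C2) (hu : u ∈ C1) (hv : v ∈ C2) :
    IsContractibleNonEdge G u v := by
  have huS : u ∉ S := h1.2.1 hu
  have hvS : v ∉ S := h2.2.1 hv
  have hsep := h1.not_reachable h2 h12 hu hv
  have huv : u ≠ v := by rintro rfl; exact hsep .rfl
  have hadj : ¬ G.Adj u v := fun h => hsep (Adj.reachable (G := G.induce Sᶜ) h)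
  have hcard : 5 ≤ Nat.card V := by
    have := Set.ncard_le_card (insert u (insert v S))
    rwa [Set.ncard_insert_insert huv huS hvS, hS3] at this
  refine isContractibleNonEdge_of_connected_preimage huv hadj hcard fun T hT => ?_
  by_cases huT : ⟨u, huv⟩ ∈ T
  · have := ncard_preimage_contractNonEdgeProj_le huv T
    refine hG.connected_induce_compl_of_not_reachable (by omega) (fun x hx y hy => htri x hx y hy)
      huS hvS hsep (by omega) ?_ ?_
    · rwa [Set.mem_preimage, contractNonEdgeProj_of_ne huv huv]
    · rwa [Set.mem_preimage, contractNonEdgeProj_self]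
  · exact hG.2 _ ((ncard_preimage_contractNonEdgeProj_le_of_notMem huv huT).trans_lt hT)

/-- Let `G` be a finite 3-connected graph and `S` a 3-cut of `G` whose three vertices
are pairwise adjacent in `G`. If `u` and `v` lie in different components of `G − S`,
then `{u, v}` is a contractible non-edge of `G`. -/
theorem stmt14 {V : Type*} [Fintype V] (G : SimpleGraph V) (hG : KConnected 3 G)
    (S : Set V) (hS3 : S.ncard = 3) (hScut : IsCutSet G S)
    (htri : ∀ x ∈ S, ∀ y ∈ S, x ≠ y → G.Adj x y)
    (u v : V) (C1 C2 : Set V) (h1 : IsCompOf G S C1) (h2 : IsCompOf G S C2)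
    (h12 : C1 ≠ C2) (hu : u ∈ C1) (hv : v ∈ C2) :
    IsContractibleNonEdge G u v :=
  stmt14_general G hG S hS3 htri u v C1 C2 h1 h2 h12 hu hv
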